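/- Let a, b, c be positive integers with gcd(a+c, b+c) ≤ c. Then the partizan subtraction game with S_L = {a, b} and S_R = {c} is strongly dominated by Left: there exists n₀ such that for all n ≥ n₀ the outcome of n is L. -/

import Mathlib

mutual
def LeftFirstWins (SL SR : Finset ℕ) : ℕ → Prop
  | n => ∃ s ∈ SL, ∃ (_ : 0 < s) (_ : s ≤ n), ¬ RightFirstWins SL SR (n - s)
  termination_by n => n
  decreasing_by omega
def RightFirstWins (SL SR : Finset ℕ) : ℕ → Prop
  | n => ∃ s ∈ SR, ∃ (_ : 0 < s) (_ : s ≤ n), ¬ LeftFirstWins SL SR (n - s)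
  termination_by n => n
  decreasing_by omega
end

inductive Outcome | P | L | R | N
deriving DecidableEq

open Classical in
noncomputable def outcome (SL SR : Finset ℕ) (n : ℕ) : Outcome :=
  if LeftFirstWins SL SR n then
    if RightFirstWins SL SR n then .N else .L
  else
    if RightFirstWins SL SR n then .R else .P

section Aux

variable (a b c : ℕ)

lemma left_iff (n : ℕ) : LeftFirstWins {a, b} {c} n ↔
    (0 < a ∧ a ≤ n ∧ ¬ RightFirstWins {a, b} {c} (n - a)) ∨
    (0 < b ∧ b ≤ n ∧ ¬ RightFirstWins {a, b} {c} (n - b)) := by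
  rw [LeftFirstWins]
  constructor
  · rintro ⟨s, hs, hpos, hle, hr⟩
    simp only [Finset.mem_insert, Finset.mem_singleton] at hs
    rcases hs with rfl | rfl
    · exact Or.inl ⟨hpos, hle, hr⟩
    · exact Or.inr ⟨hpos, hle, hr⟩
  · rintro (⟨hpos, hle, hr⟩ | ⟨hpos, hle, hr⟩)
    · exact ⟨a, by simp, hpos, hle, hr⟩
    · exact ⟨b, by simp, hpos, hle, hr⟩

lemma right_iff (n : ℕ) : RightFirstWins {a, b} {c} n ↔
    (0 < c ∧ c ≤ n ∧ ¬ LeftFirstWins {a, b} {c} (n - c)) := by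
  rw [RightFirstWins]
  constructor
  · rintro ⟨s, hs, hpos, hle, hr⟩
    simp only [Finset.mem_singleton] at hs
    subst hs
    exact ⟨hpos, hle, hr⟩
  · rintro ⟨hpos, hle, hr⟩
    exact ⟨c, by simp, hpos, hle, hr⟩

lemma base_win (ha : 0 < a) (n : ℕ) (h1 : a ≤ n) (h2 : n < a + c) :
    LeftFirstWins {a, b} {c} n := by
  rw [left_iff]
  refine Or.inl ⟨ha, h1, ?_⟩
  rw [right_iff]
  rintro ⟨-, hle, -⟩
  omega

lemma step_a (ha : 0 < a) (hc : 0 < c) (m : ℕ) (hm : LeftFirstWins {a, b} {c} m) :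
    LeftFirstWins {a, b} {c} (m + (a + c)) := by
  rw [left_iff]
  refine Or.inl ⟨ha, by omega, ?_⟩
  rw [right_iff]
  rintro ⟨-, -, hnl⟩
  have heq : m + (a + c) - a - c = m := by omega
  rw [heq] at hnl
  exact hnl hm

lemma step_b (hb : 0 < b) (hc : 0 < c) (m : ℕ) (hm : LeftFirstWins {a, b} {c} m) :
    LeftFirstWins {a, b} {c} (m + (b + c)) := by
  rw [left_iff]
  refine Or.inr ⟨hb, by omega, ?_⟩
  rw [right_iff]
  rintro ⟨-, -, hnl⟩
  have heq : m + (b + c) - b - c = m := by omega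
  rw [heq] at hnl
  exact hnl hm

lemma step_many (ha : 0 < a) (hb : 0 < b) (hc : 0 < c) (m : ℕ)
    (hm : LeftFirstWins {a, b} {c} m) (x y : ℕ) :
    LeftFirstWins {a, b} {c} (m + x * (a + c) + y * (b + c)) := by
  induction y with
  | zero =>
    simp only [Nat.zero_mul, Nat.add_zero]
    induction x with
    | zero => simpa using hm
    | succ x ih =>
      have h1 := step_a a b c ha hc _ ih
      have heq : m + x * (a + c) + (a + c) = m + (x + 1) * (a + c) := by ring
      rwa [heq] at h1
  | succ y ih =>
    have h1 := step_b a b c hb hc _ ih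
    have heq : m + x * (a + c) + y * (b + c) + (b + c)
        = m + x * (a + c) + (y + 1) * (b + c) := by ring
    rwa [heq] at h1

end Aux

/-- Representability: any `n ≥ p * q` with `p`, `q` coprime positive is `x*p + y*q`. -/
lemma rep_lemma (p q n : ℕ) (hp : 0 < p) (hq : 0 < q) (cop : Nat.Coprime p q)
    (hn : p * q ≤ n) : ∃ x y : ℕ, n = x * p + y * q := by
  rcases eq_or_lt_of_le (show 1 ≤ p from hp) with hp1 | hp1
  · exact ⟨n, 0, by rw [← hp1]; ring⟩
  rcases eq_or_lt_of_le (show 1 ≤ q from hq) with hq1 | hq1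
  · exact ⟨0, n, by rw [← hq1]; ring⟩
  have hf := frobeniusNumber_pair cop hp1 hq1
  rw [FrobeniusNumber] at hf
  have hmem : n ∈ AddSubmonoid.closure ({p, q} : Set ℕ) := by
    by_contra hcon
    have h2 := hf.2 hcon
    have hpq : p + q ≤ p * q := Nat.add_le_mul hp1 hq1
    omega
  rw [AddSubmonoid.mem_closure_pair] at hmem
  obtain ⟨x, y, hxy⟩ := hmem
  exact ⟨x, y, by simpa [smul_eq_mul] using hxy.symm⟩

lemma eventually_left (a b c : ℕ) (ha : 0 < a) (hb : 0 < b) (hc : 0 < c)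
    (h : Nat.gcd (a + c) (b + c) ≤ c) :
    ∀ n, a + (a + c) * (b + c) ≤ n → LeftFirstWins {a, b} {c} n := by
  intro n hn
  set g := Nat.gcd (a + c) (b + c) with hg
  have hg0 : 0 < g := Nat.gcd_pos_of_pos_left _ (by omega)
  obtain ⟨p, hp⟩ : g ∣ a + c := Nat.gcd_dvd_left _ _
  obtain ⟨q, hq⟩ : g ∣ b + c := Nat.gcd_dvd_right _ _
  have hp0 : 0 < p := by
    rcases Nat.eq_zero_or_pos p with h0 | h0
    · subst h0; simp at hp; omega
    · exact h0
  have hq0 : 0 < q := by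
    rcases Nat.eq_zero_or_pos q with h0 | h0
    · subst h0; simp at hq; omega
    · exact h0
  have hpdiv : (a + c) / g = p := by rw [hp, Nat.mul_div_cancel_left _ hg0]
  have hqdiv : (b + c) / g = q := by rw [hq, Nat.mul_div_cancel_left _ hg0]
  have cop : Nat.Coprime p q := by
    rw [← hpdiv, ← hqdiv]
    exact Nat.coprime_div_gcd_div_gcd hg0
  -- pick k = (n - a) / g
  set t := n - a with ht
  set k := t / g with hk
  have hkey : p * q ≤ k := by
    rw [hk, Nat.le_div_iff_mul_le hg0]
    have hA : (a + c) * (b + c) = g * g * (p * q) := by rw [hp, hq]; ring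
    have h1g : g * (p * q) ≤ g * g * (p * q) :=
      Nat.mul_le_mul_right _ (Nat.le_mul_of_pos_left g hg0)
    have heq2 : p * q * g = g * (p * q) := by ring
    omega
  obtain ⟨x, y, hxy⟩ := rep_lemma p q k hp0 hq0 cop hkey
  set r := a + t % g with hr
  have hmod := Nat.div_add_mod t g
  have hrb : a ≤ r ∧ r < a + c := by
    constructor
    · omega
    · have := Nat.mod_lt t hg0
      omega
  have hbase : LeftFirstWins {a, b} {c} r := base_win a b c ha r hrb.1 hrb.2
  have hstep := step_many a b c ha hb hc r hbase x y
  have heq : r + x * (a + c) + y * (b + c) = n := by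
    have h1 : x * (a + c) = x * p * g := by rw [hp]; ring
    have h2 : y * (b + c) = y * q * g := by rw [hq]; ring
    have h3 : x * p * g + y * q * g = k * g := by rw [hxy]; ring
    have h4 : k * g = g * (t / g) := by rw [hk, Nat.mul_comm]
    omega
  rwa [heq] at hstep

theorem stmt_5 (a b c : ℕ) (ha : 0 < a) (hb : 0 < b) (hc : 0 < c)
    (h : Nat.gcd (a + c) (b + c) ≤ c) :
    ∃ n₀ : ℕ, ∀ n ≥ n₀, outcome {a, b} {c} n = .L := by
  refine ⟨a + (a + c) * (b + c) + c, fun n hn => ?_⟩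
  have hL : LeftFirstWins {a, b} {c} n :=
    eventually_left a b c ha hb hc h n (by omega)
  have hnR : ¬ RightFirstWins {a, b} {c} n := by
    rw [right_iff]
    rintro ⟨-, hle, hnl⟩
    exact hnl (eventually_left a b c ha hb hc h (n - c) (by omega))
  simp [outcome, hL, hnR]
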